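/- Under the hypotheses of the previous error-propagation lemma, with u C² on (0,1]² and u_h defined by the weighted-average filling recursion, one has max over D_h of |u − u_h| ≤ K·h with K = D·r², where D bounds the Hessian of u. Consequently for every p ∈ [1,∞], the discrete L^p norm ∥u − u_h∥_p (with ∥f∥_p := (Σ_{x∈D_h} |f(x)|^p h²)^{1/p}) satisfies ∥u − u_h∥_p ≤ K·h. -/

import Mathlib

/-!
The exact solution satisfies the filling recursion up to a local truncation error of order
`h²`: averaging the first-order Taylor expansions of `u` around `x` produces the term
`h • fderiv ℝ u x g*`, which the transport equation kills, leaving only second-order remainders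
of size at most `D (r h)²`. Since every stencil point lies at least one row (height `h`) lower,
and a weighted average with positive weights does not increase the sup norm, the error grows by
at most `D r² h²` per row, hence is at most `N · D r² h² = D r² h` on the `N` rows of the grid.
The discrete `L^p` norms are bounded by the sup norm because the grid has total mass
`N² h² = 1`.
-/

open Finset

section

variable {ι E F : Type*} [NormedAddCommGroup E] [NormedSpace ℝ E]
  [NormedAddCommGroup F] [NormedSpace ℝ F]

theorem Finset.centerMass_sub_centerMass (t : Finset ι) (w : ι → ℝ) (z₁ z₂ : ι → E) :
    t.centerMass w z₁ - t.centerMass w z₂ = t.centerMass w (fun i => z₁ i - z₂ i) := by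
  simp only [Finset.centerMass, smul_sub, Finset.sum_sub_distrib]

theorem ContinuousLinearMap.map_centerMass (L : E →L[ℝ] F) (t : Finset ι) (w : ι → ℝ)
    (z : ι → E) : L (t.centerMass w z) = t.centerMass w (fun i => L (z i)) := by
  simp only [Finset.centerMass, map_smul, map_sum]

theorem norm_fderiv_sub_fderiv_le {u : E → F} (hu : ContDiff ℝ 2 u) {D : ℝ}
    (hD : ∀ x, ‖iteratedFDeriv ℝ 2 u x‖ ≤ D) (x z : E) :
    ‖fderiv ℝ u z - fderiv ℝ u x‖ ≤ D * ‖z - x‖ := by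
  have hdiff : Differentiable ℝ (fderiv ℝ u) :=
    (hu.fderiv_right (m := 1) le_rfl).differentiable one_ne_zero
  refine convex_univ.norm_image_sub_le_of_norm_fderiv_le (fun a _ => hdiff a)
    (fun a _ => ?_) (Set.mem_univ x) (Set.mem_univ z)
  rw [← norm_iteratedFDeriv_one, norm_iteratedFDeriv_fderiv]
  exact hD a

theorem norm_sub_sub_fderiv_le {u : E → F} (hu : ContDiff ℝ 2 u) {D : ℝ}
    (hD : ∀ x, ‖iteratedFDeriv ℝ 2 u x‖ ≤ D) (x v : E) :
    ‖u (x + v) - u x - fderiv ℝ u x v‖ ≤ D * ‖v‖ ^ 2 := by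
  have hD0 : 0 ≤ D := (norm_nonneg _).trans (hD x)
  set R : E → F := fun z => u z - fderiv ℝ u x z
  have hR : ∀ z, HasFDerivAt R (fderiv ℝ u z - fderiv ℝ u x) z := fun z =>
    ((hu.differentiable two_ne_zero z).hasFDerivAt).sub (fderiv ℝ u x).hasFDerivAt
  have hmvt := (convex_closedBall x ‖v‖).norm_image_sub_le_of_norm_hasFDerivWithin_le
    (fun z _ => (hR z).hasFDerivWithinAt) (fun z hz => (norm_fderiv_sub_fderiv_le hu hD x z).trans
      (mul_le_mul_of_nonneg_left (mem_closedBall_iff_norm.mp hz) hD0))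
    (Metric.mem_closedBall_self (norm_nonneg v)) (y := x + v) (by simp)
  have hRv : R (x + v) - R x = u (x + v) - u x - fderiv ℝ u x v := by
    simp only [R, map_add]; abel
  rw [← hRv, sq, ← mul_assoc]
  simpa using hmvt

theorem norm_centerMass_sub_le {u : E → F} (hu : ContDiff ℝ 2 u) {D : ℝ}
    (hD : ∀ x, ‖iteratedFDeriv ℝ 2 u x‖ ≤ D) {A : Finset E} {w : E → ℝ}
    (hw : ∀ y ∈ A, 0 ≤ w y) (hS : 0 < ∑ y ∈ A, w y) {R : ℝ} (hA : ∀ y ∈ A, ‖y‖ ≤ R)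
    {x : E} (hx : fderiv ℝ u x (A.centerMass w id) = 0) (h : ℝ) :
    ‖A.centerMass w (fun y => u (x + h • y)) - u x‖ ≤ D * (h * R) ^ 2 := by
  have hD0 : 0 ≤ D := (norm_nonneg _).trans (hD x)
  have hlin : A.centerMass w (fun y => fderiv ℝ u x (h • y)) = 0 := by
    rw [← ContinuousLinearMap.map_centerMass, Finset.centerMass_smul, map_smul]
    exact smul_eq_zero_of_right h hx
  have hsplit : A.centerMass w (fun y => u (x + h • y)) - u x =
      A.centerMass w (fun y => u (x + h • y) - u x - fderiv ℝ u x (h • y)) := by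
    rw [← Finset.centerMass_sub_centerMass, ← Finset.centerMass_sub_centerMass, hlin,
      sub_zero]
    exact congrArg _ (Finset.centerMass_const hS.ne' (u x)).symm
  rw [hsplit, ← mem_closedBall_zero_iff]
  refine (convex_closedBall _ _).centerMass_mem hw hS fun y hy => ?_
  rw [mem_closedBall_zero_iff]
  refine (norm_sub_sub_fderiv_le hu hD x (h • y)).trans (mul_le_mul_of_nonneg_left ?_ hD0)
  rw [norm_smul, Real.norm_eq_abs, mul_pow, mul_pow, sq_abs]
  exact mul_le_mul_of_nonneg_left (pow_le_pow_left₀ (norm_nonneg y) (hA y hy) 2) (sq_nonneg h)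

end

theorem norm_le_of_norm_sub_centerMass_le {F : Type*} [NormedAddCommGroup F] [NormedSpace ℝ F]
    {A : Finset (ℝ × ℝ)} {w : ℝ × ℝ → ℝ} (hw : ∀ y ∈ A, 0 ≤ w y) (hS : 0 < ∑ y ∈ A, w y)
    (hA : ∀ y ∈ A, y.2 ≤ -1) {h ε : ℝ} (hh : 0 ≤ h) (hε : 0 ≤ ε) {e : ℝ × ℝ → F}
    (hbdry : ∀ x : ℝ × ℝ, x.2 ≤ 0 → e x = 0)
    (hdefect : ∀ x : ℝ × ℝ, 0 < x.2 → ‖e x - A.centerMass w (fun y => e (x + h • y))‖ ≤ ε)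
    (j : ℕ) (x : ℝ × ℝ) (hx : x.2 ≤ j * h) : ‖e x‖ ≤ j * ε := by
  induction j generalizing x with
  | zero =>
    rw [Nat.cast_zero, zero_mul] at hx ⊢
    rw [hbdry x hx, norm_zero]
  | succ j ih =>
    rcases le_or_gt x.2 0 with hx0 | hx0
    · rw [hbdry x hx0, norm_zero]; positivity
    have havg : ‖A.centerMass w (fun y => e (x + h • y))‖ ≤ j * ε := by
      rw [← mem_closedBall_zero_iff]
      refine (convex_closedBall _ _).centerMass_mem hw hS fun y hy => ?_
      rw [mem_closedBall_zero_iff]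
      refine ih _ ?_
      have : h * y.2 ≤ -h := by nlinarith [hA y hy]
      simp only [Prod.snd_add, Prod.smul_snd, smul_eq_mul]
      push_cast at hx
      linarith
    calc ‖e x‖ ≤ ‖e x - A.centerMass w (fun y => e (x + h • y))‖ +
          ‖A.centerMass w (fun y => e (x + h • y))‖ := norm_le_norm_sub_add _ _
      _ ≤ ε + j * ε := add_le_add (hdefect x hx0) havg
      _ = (j + 1 : ℕ) * ε := by push_cast; ring

theorem Prod.norm_le_sqrt_sq_add_sq (y : ℝ × ℝ) : ‖y‖ ≤ √(y.1 ^ 2 + y.2 ^ 2) := by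
  rw [Prod.norm_def, Real.norm_eq_abs, Real.norm_eq_abs]
  exact max_le (Real.abs_le_sqrt (by nlinarith)) (Real.abs_le_sqrt (by nlinarith))

theorem rpow_sum_rpow_mul_le {ι : Type*} (s : Finset ι) {f m : ι → ℝ} {K p : ℝ}
    (hf : ∀ i ∈ s, 0 ≤ f i) (hfK : ∀ i ∈ s, f i ≤ K) (hK : 0 ≤ K) (hm : ∀ i ∈ s, 0 ≤ m i)
    (hm1 : ∑ i ∈ s, m i = 1) (hp : 0 < p) :
    (∑ i ∈ s, f i ^ p * m i) ^ (1 / p) ≤ K := by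
  have hsum : ∑ i ∈ s, f i ^ p * m i ≤ K ^ p := by
    calc ∑ i ∈ s, f i ^ p * m i ≤ ∑ i ∈ s, K ^ p * m i :=
          sum_le_sum fun i hi => mul_le_mul_of_nonneg_right
            (Real.rpow_le_rpow (hf i hi) (hfK i hi) hp.le) (hm i hi)
      _ = K ^ p := by rw [← mul_sum, hm1, mul_one]
  calc (∑ i ∈ s, f i ^ p * m i) ^ (1 / p) ≤ (K ^ p) ^ (1 / p) :=
        Real.rpow_le_rpow (sum_nonneg fun i hi => mul_nonneg (Real.rpow_nonneg (hf i hi) p)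
          (hm i hi)) hsum (one_div_nonneg.mpr hp.le)
    _ = K := by rw [← Real.rpow_mul hK, mul_one_div_cancel hp.ne', Real.rpow_one]

theorem stmt_4_general (N : ℕ) (hN : 1 ≤ N) (h : ℝ) (hh : h = 1 / N)
    (r : ℤ)
    (A : Finset (ℝ × ℝ)) (hA : A.Nonempty)
    (hAnorm : ∀ y ∈ A, Real.sqrt (y.1 ^ 2 + y.2 ^ 2) ≤ (r : ℝ))
    (hAlow : ∀ y ∈ A, y.2 ≤ -1)
    (w : ℝ × ℝ → ℝ) (hw : ∀ y ∈ A, 0 < w y)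
    (u : ℝ × ℝ → ℝ) (hu : ContDiff ℝ 2 u)
    (D : ℝ) (hHess : ∀ x : ℝ × ℝ, ‖iteratedFDeriv ℝ 2 u x‖ ≤ D)
    (gstar : ℝ × ℝ) (hg : gstar = (∑ y ∈ A, w y)⁻¹ • ∑ y ∈ A, w y • y)
    (htransport : ∀ x : ℝ × ℝ, fderiv ℝ u x gstar = 0)
    (uh : ℝ × ℝ → ℝ)
    (hbdry : ∀ x : ℝ × ℝ, x.2 ≤ 0 → uh x = u x)
    (hrec : ∀ x : ℝ × ℝ, 0 < x.2 →
      uh x = (∑ y ∈ A, w y)⁻¹ * ∑ y ∈ A, w y * uh (x + h • y)) :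
    (∀ i j : ℕ, 1 ≤ i → i ≤ N → 1 ≤ j → j ≤ N →
      |uh ((i : ℝ) * h, (j : ℝ) * h) - u ((i : ℝ) * h, (j : ℝ) * h)| ≤
        D * (r : ℝ) ^ 2 * h) ∧
    (∀ p : ℝ, 1 ≤ p →
      (∑ q ∈ Finset.Icc 1 N ×ˢ Finset.Icc 1 N,
          |uh ((q.1 : ℝ) * h, (q.2 : ℝ) * h) -
            u ((q.1 : ℝ) * h, (q.2 : ℝ) * h)| ^ p * h ^ 2) ^ (1 / p) ≤
        D * (r : ℝ) ^ 2 * h) := by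
  have hD : 0 ≤ D := (norm_nonneg _).trans (hHess 0)
  have hh0 : 0 ≤ h := hh ▸ by positivity
  have hNh : (N : ℝ) * h = 1 := by rw [hh]; field_simp
  have hS : 0 < ∑ y ∈ A, w y := sum_pos hw hA
  have hg' : gstar = A.centerMass w id := hg
  have hdefect (x : ℝ × ℝ) (hx : 0 < x.2) :
      ‖(uh x - u x) - A.centerMass w (fun y => uh (x + h • y) - u (x + h • y))‖ ≤
        D * (h * r) ^ 2 := by
    have hx' : uh x = A.centerMass w (fun y => uh (x + h • y)) := hrec x hx
    rw [← Finset.centerMass_sub_centerMass, ← hx', sub_sub_sub_cancel_left]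
    exact norm_centerMass_sub_le hu hHess (fun y hy => (hw y hy).le) hS
      (fun y hy => (y.norm_le_sqrt_sq_add_sq).trans (hAnorm y hy)) (hg' ▸ htransport x) h
  have hmax (i j : ℕ) (hjN : j ≤ N) :
      |uh ((i : ℝ) * h, (j : ℝ) * h) - u ((i : ℝ) * h, (j : ℝ) * h)| ≤ D * (r : ℝ) ^ 2 * h := by
    have := norm_le_of_norm_sub_centerMass_le (e := fun x => uh x - u x)
      (fun y hy => (hw y hy).le) hS hAlow hh0 (by positivity)
      (fun x hx => sub_eq_zero.mpr (hbdry x hx)) hdefect N ((i : ℝ) * h, (j : ℝ) * h)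
      (by dsimp only; gcongr)
    calc _ ≤ (N : ℝ) * (D * (h * r) ^ 2) := this
      _ = D * (r : ℝ) ^ 2 * h * (N * h) := by ring
      _ = D * (r : ℝ) ^ 2 * h := by rw [hNh, mul_one]
  refine ⟨fun i j _ _ _ hjN => hmax i j hjN, fun p hp => ?_⟩
  refine rpow_sum_rpow_mul_le _ (fun _ _ => abs_nonneg _)
    (fun q hq => hmax q.1 q.2 (mem_Icc.mp (mem_product.mp hq).2).2) (by positivity)
    (fun _ _ => sq_nonneg h) ?_ (by linarith)
  rw [sum_const, card_product, Nat.card_Icc, nsmul_eq_mul]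
  push_cast
  linear_combination (N * h + 1) * hNh

/-- Smooth-boundary-data convergence: under the hypotheses of the
error-propagation lemma, `max_{D_h} |u - u_h| ≤ K h` with `K = D r²`, and
consequently for every `p ∈ [1,∞)` the discrete `L^p` norm
`(Σ_{x ∈ D_h} |u - u_h|^p h²)^{1/p}` is also bounded by `K h`
(the `p = ∞` case being the max bound). -/
theorem stmt_4 (N : ℕ) (hN : 1 ≤ N) (h : ℝ) (hh : h = 1 / N)
    (r : ℤ) (hr : 2 ≤ r)
    (A : Finset (ℝ × ℝ)) (hA : A.Nonempty)
    (hAnorm : ∀ y ∈ A, Real.sqrt (y.1 ^ 2 + y.2 ^ 2) ≤ (r : ℝ))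
    (hAlow : ∀ y ∈ A, y.2 ≤ -1)
    (w : ℝ × ℝ → ℝ) (hw : ∀ y ∈ A, 0 < w y)
    (u : ℝ × ℝ → ℝ) (hu : ContDiff ℝ 2 u)
    (D : ℝ) (hHess : ∀ x : ℝ × ℝ, ‖iteratedFDeriv ℝ 2 u x‖ ≤ D)
    (gstar : ℝ × ℝ) (hg : gstar = (∑ y ∈ A, w y)⁻¹ • ∑ y ∈ A, w y • y)
    (htransport : ∀ x : ℝ × ℝ, fderiv ℝ u x gstar = 0)
    (uh : ℝ × ℝ → ℝ)
    (hbdry : ∀ x : ℝ × ℝ, x.2 ≤ 0 → uh x = u x)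
    (hrec : ∀ x : ℝ × ℝ, 0 < x.2 →
      uh x = (∑ y ∈ A, w y)⁻¹ * ∑ y ∈ A, w y * uh (x + h • y)) :
    (∀ i j : ℕ, 1 ≤ i → i ≤ N → 1 ≤ j → j ≤ N →
      |uh ((i : ℝ) * h, (j : ℝ) * h) - u ((i : ℝ) * h, (j : ℝ) * h)| ≤
        D * (r : ℝ) ^ 2 * h) ∧
    (∀ p : ℝ, 1 ≤ p →
      (∑ q ∈ Finset.Icc 1 N ×ˢ Finset.Icc 1 N,
          |uh ((q.1 : ℝ) * h, (q.2 : ℝ) * h) -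
            u ((q.1 : ℝ) * h, (q.2 : ℝ) * h)| ^ p * h ^ 2) ^ (1 / p) ≤
        D * (r : ℝ) ^ 2 * h) :=
  stmt_4_general N hN h hh r A hA hAnorm hAlow w hw u hu D hHess gstar hg htransport uh hbdry hrec
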